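/- arXiv:2603.04020 — 2 statements merged into one kernel-verified Lean document; each statement's English description precedes it below -/
import Mathlib

section
/- Let X be a finite set with |X| ≥ 2 and φ : X* → X* a finite-state automorphism of the rooted tree X*. Let Fix_φ denote the fixed-point set of the induced homeomorphism of X^ℕ and let μ be the uniform Bernoulli measure on X^ℕ. Then μ(Fix_φ \ interior(Fix_φ)) = 0. -/
/-- An automorphism of the rooted tree `X*` of finite words over `X`: a bijection of
`List X` preserving lengths and prefixes. -/
structure TreeAut (X : Type*) where
  toFun : List X → List X
  invFun : List X → List X
  left_inv : Function.LeftInverse invFun toFun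
  right_inv : Function.RightInverse invFun toFun
  length_eq : ∀ w : List X, (toFun w).length = w.length
  take_append : ∀ w v : List X, (toFun (w ++ v)).take w.length = toFun w

/-- The restriction (section) `φ|_w` of a tree automorphism `φ` at the word `w`,
characterised by `φ(w v) = φ(w) φ|_w(v)`. -/
def TreeAut.restrict {X : Type*} (φ : TreeAut X) (w : List X) : List X → List X :=
  fun v => (φ.toFun (w ++ v)).drop w.length

/-- The set `P_k` of words of length `k` fixed by `φ` whose restriction is nontrivial. -/
def TreeAut.badWords {X : Type*} (φ : TreeAut X) (k : ℕ) : Set (List X) :=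
  {w : List X | w.length = k ∧ φ.toFun w = w ∧ φ.restrict w ≠ id}

open MeasureTheory
open scoped ENNReal

/-- The prefix of length `n` of a sequence `x : ℕ → X`, as a word. -/
def prefixWord {X : Type*} (x : ℕ → X) (n : ℕ) : List X :=
  List.ofFn (fun i : Fin n => x i)

/-- The cylinder set of sequences beginning with the word `w`. -/
def cylinder {X : Type*} (w : List X) : Set (ℕ → X) :=
  {x : ℕ → X | prefixWord x w.length = w}

/-- The homeomorphism of `X^ℕ` induced by a tree automorphism `φ`: the `n`-th letter of
`φ(x)` is the `n`-th letter of `φ` applied to the prefix of `x` of length `n + 1`. -/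
def TreeAut.seqAct {X : Type*} (φ : TreeAut X) (x : ℕ → X) : ℕ → X :=
  fun n => (φ.toFun (prefixWord x (n + 1))).getD n (x n)

/-- The fixed-point set in `X^ℕ` of the homeomorphism induced by `φ`. -/
def TreeAut.fixSeq {X : Type*} (φ : TreeAut X) : Set (ℕ → X) :=
  {x : ℕ → X | φ.seqAct x = x}

/-!
A point of `Fix_φ` lies in its interior as soon as one of its prefixes `p` is fixed with trivial
section `φ|_p`, so a boundary point has a "bad" prefix (fixed, nontrivial section) at every level.
Finite-stateness gives a uniform `N` such that every nontrivial section moves some word of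
length `N`; hence each bad word of length `k` has at most `|X|^N - 1` bad extensions of length
`k + N`, there are at most `(|X|^N - 1)^j` bad words of length `jN`, and their cylinders, which
cover the boundary, have total mass at most `(1 - |X|^{-N})^j → 0`.
-/

namespace TreeAut

variable {X : Type*} (φ : TreeAut X)

theorem toFun_append (w v : List X) : φ.toFun (w ++ v) = φ.toFun w ++ φ.restrict w v := by
  rw [← φ.take_append w v]
  exact (List.take_append_drop _ _).symm

theorem length_restrict (w v : List X) : (φ.restrict w v).length = v.length := by
  simp [restrict, φ.length_eq]

theorem toFun_eq_self_of_isPrefix {w v : List X} (hwv : w <+: v) (hv : φ.toFun v = v) :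
    φ.toFun w = w := by
  obtain ⟨u, rfl⟩ := hwv
  rw [← φ.take_append w u, hv, List.take_left]

theorem restrict_eq_self_of_append {w v : List X} (h : φ.toFun (w ++ v) = w ++ v) :
    φ.restrict w v = v := by
  rw [restrict, h, List.drop_left]

theorem take_restrict_append (w v u : List X) :
    (φ.restrict w (v ++ u)).take v.length = φ.restrict w v := by
  have h := congrArg (List.drop w.length) (φ.take_append (w ++ v) u)
  rwa [List.append_assoc, List.length_append, ← List.take_drop] at h

theorem restrict_append_eq_id {w : List X} (hw : φ.restrict w = id) (v : List X) :
    φ.restrict (w ++ v) = id := by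
  funext u
  rw [restrict, List.append_assoc, toFun_append, hw, id_eq, id_eq, List.length_append,
    ← φ.length_eq w, ← List.drop_drop, List.drop_left, List.drop_left]

theorem exists_length_eq_restrict_ne {w v : List X} (hv : φ.restrict w v ≠ v) {n : ℕ}
    (hn : v.length ≤ n) : ∃ u : List X, u.length = n ∧ φ.restrict w u ≠ u := by
  have hv₀ : v ≠ [] := by
    rintro rfl
    exact hv (List.eq_nil_of_length_eq_zero (φ.length_restrict w []))
  refine ⟨v ++ List.replicate (n - v.length) (v.head hv₀), by simp; omega, fun h => hv ?_⟩
  rw [← φ.take_restrict_append w v, h, List.take_left]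

def NontrivialRestrictMovesAt (N : ℕ) : Prop :=
  ∀ p : List X, φ.restrict p ≠ id → ∃ s : List X, s.length = N ∧ φ.restrict p s ≠ s

theorem exists_nontrivialRestrictMovesAt
    (hfs : (Set.range fun w : List X => φ.restrict w).Finite) :
    ∃ N : ℕ, φ.NontrivialRestrictMovesAt N := by
  have hev : ∀ᶠ N in Filter.atTop, ∀ ψ ∈ Set.range fun w : List X => φ.restrict w,
      ψ ≠ id → ∃ s : List X, s.length = N ∧ ψ s ≠ s := by
    refine (Filter.eventually_all_finite hfs).2 ?_
    rintro _ ⟨p, rfl⟩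
    by_cases hp : φ.restrict p = id
    · exact Filter.Eventually.of_forall fun _ h => absurd hp h
    obtain ⟨v, hv⟩ : ∃ v, φ.restrict p v ≠ v := by
      by_contra! h
      exact hp (funext h)
    filter_upwards [Filter.eventually_ge_atTop v.length] with N hN _
    exact φ.exists_length_eq_restrict_ne hv hN
  obtain ⟨N, hN⟩ := hev.exists
  exact ⟨N, fun p => hN _ ⟨p, rfl⟩⟩

end TreeAut

section Sequences

variable {X : Type*}

@[simp] theorem length_prefixWord (x : ℕ → X) (n : ℕ) : (prefixWord x n).length = n := by
  simp [prefixWord]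

theorem prefixWord_succ (x : ℕ → X) (n : ℕ) :
    prefixWord x (n + 1) = prefixWord x n ++ [x n] := by
  simp only [prefixWord, List.ofFn_succ_last]
  rfl

theorem prefixWord_add (x : ℕ → X) (m n : ℕ) :
    prefixWord x (m + n) = prefixWord x m ++ List.ofFn fun i : Fin n => x (m + i) := by
  simp [prefixWord, List.ofFn_add]

theorem mem_cylinder_prefixWord (x : ℕ → X) (n : ℕ) :
    x ∈ _root_.cylinder (prefixWord x n) := by
  simp [_root_.cylinder]

theorem isOpen_cylinder [TopologicalSpace X] [DiscreteTopology X] (w : List X) :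
    IsOpen (_root_.cylinder w) :=
  have hcont : Continuous fun (y : ℕ → X) (i : Fin w.length) => y i := by fun_prop
  hcont.isOpen_preimage {s | List.ofFn s = w} (isOpen_discrete _)

namespace TreeAut

variable (φ : TreeAut X)

theorem seqAct_apply (x : ℕ → X) (n : ℕ) :
    φ.seqAct x n = (φ.restrict (prefixWord x n) [x n]).getD 0 (x n) := by
  rw [seqAct, prefixWord_succ, toFun_append,
    List.getD_append_right _ _ _ _ (by simp [φ.length_eq]), φ.length_eq, length_prefixWord,
    Nat.sub_self]

theorem mem_fixSeq_iff {x : ℕ → X} :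
    x ∈ φ.fixSeq ↔ ∀ n, φ.toFun (prefixWord x n) = prefixWord x n := by
  refine ⟨fun hx n => ?_, fun h => funext fun n => ?_⟩
  · induction n with
    | zero => exact List.eq_nil_of_length_eq_zero (by simp [φ.length_eq])
    | succ n ih =>
      obtain ⟨a, ha⟩ := List.length_eq_one_iff.1 (φ.length_restrict (prefixWord x n) [x n])
      have hax : a = x n := by simpa [ha] using (φ.seqAct_apply x n).symm.trans (congrFun hx n)
      rw [prefixWord_succ, toFun_append, ih, ha, hax]
  · rw [seqAct, h (n + 1), prefixWord_succ]
    simp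

theorem cylinder_subset_fixSeq {p : List X} (hp : φ.toFun p = p) (hid : φ.restrict p = id) :
    _root_.cylinder p ⊆ φ.fixSeq := by
  intro y hy
  refine φ.mem_fixSeq_iff.2 fun m =>
    φ.toFun_eq_self_of_isPrefix (v := prefixWord y (m + p.length)) ?_ ?_
  · rw [prefixWord_add]
    exact List.prefix_append _ _
  · rw [Nat.add_comm, prefixWord_add, hy, toFun_append, hp, hid, id]

end TreeAut

end Sequences

section Counting

variable {X : Type*} [Fintype X]

variable (X) in
def wordsOfLength (n : ℕ) : Finset (List X) :=
  (Finset.univ : Finset (Fin n → X)).map ⟨List.ofFn, List.ofFn_injective⟩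

@[simp] theorem mem_wordsOfLength {n : ℕ} {w : List X} :
    w ∈ wordsOfLength X n ↔ w.length = n := by
  refine ⟨fun hw => ?_, fun hw => ?_⟩
  · obtain ⟨s, -, rfl⟩ := Finset.mem_map.1 hw
    exact List.length_ofFn
  · subst hw
    exact Finset.mem_map.2 ⟨w.get, Finset.mem_univ _, List.ofFn_get w⟩

theorem card_wordsOfLength (n : ℕ) : (wordsOfLength X n).card = Fintype.card X ^ n := by
  rw [wordsOfLength, Finset.card_map, Finset.card_univ, Fintype.card_fun, Fintype.card_fin]

namespace TreeAut

variable (φ : TreeAut X)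

open Classical in
noncomputable def badFinset (k : ℕ) : Finset (List X) :=
  (wordsOfLength X k).filter (· ∈ φ.badWords k)

@[simp] theorem mem_badFinset {k : ℕ} {w : List X} :
    w ∈ φ.badFinset k ↔ w ∈ φ.badWords k := by
  classical
  simp only [badFinset, Finset.mem_filter, mem_wordsOfLength, and_iff_right_iff_imp]
  exact And.left

theorem card_badFinset_add_le {N : ℕ}
    (hN : φ.NontrivialRestrictMovesAt N)
    (k : ℕ) :
    (φ.badFinset (k + N)).card ≤ (φ.badFinset k).card * (Fintype.card X ^ N - 1) := by
  classical
  let extensions (p : List X) : Finset (List X) :=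
    ((wordsOfLength X N).filter fun s => φ.restrict p s = s).image (p ++ ·)
  have hsub : φ.badFinset (k + N) ⊆ (φ.badFinset k).biUnion extensions := by
    intro w hw
    obtain ⟨hlen, hfix, hne⟩ := φ.mem_badFinset.1 hw
    rw [← List.take_append_drop k w] at hfix hne
    refine Finset.mem_biUnion.2 ⟨w.take k, φ.mem_badFinset.2 ⟨by simp [hlen], ?_, ?_⟩, ?_⟩
    · exact φ.toFun_eq_self_of_isPrefix (List.prefix_append _ _) hfix
    · exact fun hid => hne (φ.restrict_append_eq_id hid _)
    · refine Finset.mem_image.2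
        ⟨w.drop k, Finset.mem_filter.2 ⟨?_, ?_⟩, List.take_append_drop k w⟩
      · simp [hlen]
      · exact φ.restrict_eq_self_of_append hfix
  have hfiber : ∀ p ∈ φ.badFinset k, (extensions p).card ≤ Fintype.card X ^ N - 1 := by
    intro p hp
    obtain ⟨s, hs, hmoved⟩ := hN p (φ.mem_badFinset.1 hp).2.2
    have hlt :
        ((wordsOfLength X N).filter fun s => φ.restrict p s = s).card < Fintype.card X ^ N := by
      rw [← card_wordsOfLength]
      exact Finset.card_lt_card (Finset.filter_ssubset.2 ⟨s, mem_wordsOfLength.2 hs, hmoved⟩)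
    exact Finset.card_image_le.trans (Nat.le_sub_one_of_lt hlt)
  calc (φ.badFinset (k + N)).card ≤ ((φ.badFinset k).biUnion extensions).card :=
        Finset.card_le_card hsub
    _ ≤ ∑ p ∈ φ.badFinset k, (extensions p).card := Finset.card_biUnion_le
    _ ≤ (φ.badFinset k).card * (Fintype.card X ^ N - 1) := Finset.sum_le_card_nsmul _ _ _ hfiber

theorem card_badFinset_mul_le {N : ℕ}
    (hN : φ.NontrivialRestrictMovesAt N)
    (j : ℕ) : (φ.badFinset (j * N)).card ≤ (Fintype.card X ^ N - 1) ^ j := by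
  induction j with
  | zero =>
    calc (φ.badFinset (0 * N)).card ≤ (wordsOfLength X 0).card :=
          Finset.card_le_card fun w hw => by simpa using (φ.mem_badFinset.1 hw).1
      _ = (Fintype.card X ^ N - 1) ^ 0 := by simp [card_wordsOfLength]
  | succ j ih =>
    rw [Nat.succ_mul, pow_succ]
    exact (φ.card_badFinset_add_le hN _).trans (Nat.mul_le_mul_right _ ih)

end TreeAut

end Counting

theorem ENNReal.natCast_sub_one_mul_inv_lt_one (n : ℕ) :
    ((n - 1 : ℕ) : ℝ≥0∞) * (n : ℝ≥0∞)⁻¹ < 1 := by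
  rcases n.eq_zero_or_pos with rfl | hn
  · simp
  rw [← div_eq_mul_inv, ENNReal.div_lt_iff (Or.inl (by simp [hn.ne'])) (Or.inl (by simp)),
    one_mul, Nat.cast_lt]
  omega

namespace TreeAut

variable {X : Type*} [TopologicalSpace X] [DiscreteTopology X] (φ : TreeAut X)

theorem fixSeq_diff_interior_subset [Fintype X] (k : ℕ) :
    φ.fixSeq \ interior φ.fixSeq ⊆ ⋃ w ∈ φ.badFinset k, _root_.cylinder w := by
  rintro x ⟨hx, hx_int⟩
  have hfix := φ.mem_fixSeq_iff.1 hx k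
  refine Set.mem_biUnion
    (φ.mem_badFinset.2 ⟨length_prefixWord x k, hfix, fun hid => hx_int ?_⟩)
    (mem_cylinder_prefixWord x k)
  exact mem_interior.2 ⟨_, φ.cylinder_subset_fixSeq hfix hid, isOpen_cylinder _,
    mem_cylinder_prefixWord x k⟩

theorem measure_fixSeq_diff_interior_le [Fintype X] [MeasurableSpace X] {μ : Measure (ℕ → X)}
    (hμ : ∀ w : List X, μ (_root_.cylinder w) = ((Fintype.card X : ℝ≥0∞))⁻¹ ^ w.length)
    (k : ℕ) :
    μ (φ.fixSeq \ interior φ.fixSeq) ≤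
      (φ.badFinset k).card * ((Fintype.card X : ℝ≥0∞))⁻¹ ^ k :=
  calc μ (φ.fixSeq \ interior φ.fixSeq)
      ≤ μ (⋃ w ∈ φ.badFinset k, _root_.cylinder w) :=
        measure_mono (φ.fixSeq_diff_interior_subset k)
    _ ≤ ∑ w ∈ φ.badFinset k, μ (_root_.cylinder w) := measure_biUnion_finset_le _ _
    _ = (φ.badFinset k).card * ((Fintype.card X : ℝ≥0∞))⁻¹ ^ k := by
      rw [Finset.sum_congr rfl fun w hw => by rw [hμ, (φ.mem_badFinset.1 hw).1], Finset.sum_const,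
        nsmul_eq_mul]

end TreeAut

theorem bernoulli_measure_boundary_of_fixSeq_eq_zero_general
    {X : Type*} [Fintype X] [TopologicalSpace X] [DiscreteTopology X]
    [MeasurableSpace X]
    (φ : TreeAut X)
    (hfs : (Set.range fun w : List X => φ.restrict w).Finite)
    (μ : Measure (ℕ → X))
    (hμ : ∀ w : List X, μ (cylinder w) = ((Fintype.card X : ℝ≥0∞))⁻¹ ^ w.length) :
    μ (φ.fixSeq \ interior φ.fixSeq) = 0 := by
  obtain ⟨N, hN⟩ := φ.exists_nontrivialRestrictMovesAt hfs
  set c := Fintype.card X ^ N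
  have hbound (j : ℕ) :
      μ (φ.fixSeq \ interior φ.fixSeq) ≤ ((c - 1 : ℕ) * (c : ℝ≥0∞)⁻¹) ^ j :=
    calc μ (φ.fixSeq \ interior φ.fixSeq)
        ≤ (φ.badFinset (j * N)).card * ((Fintype.card X : ℝ≥0∞))⁻¹ ^ (j * N) :=
          φ.measure_fixSeq_diff_interior_le hμ _
      _ ≤ ((c - 1 : ℕ) : ℝ≥0∞) ^ j * ((Fintype.card X : ℝ≥0∞))⁻¹ ^ (j * N) := by
          gcongr
          exact_mod_cast φ.card_badFinset_mul_le hN j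
      _ = ((c - 1 : ℕ) * (c : ℝ≥0∞)⁻¹) ^ j := by
          rw [mul_pow, Nat.mul_comm, pow_mul, ← ENNReal.inv_pow, Nat.cast_pow]
  have hlim := ENNReal.tendsto_pow_atTop_nhds_zero_of_lt_one
    (ENNReal.natCast_sub_one_mul_inv_lt_one c)
  exact nonpos_iff_eq_zero.1 (ge_of_tendsto' hlim hbound)

/-- Let `X` be finite with `|X| ≥ 2`, `φ : X* → X*` a finite-state
automorphism of the rooted tree, `μ` the uniform Bernoulli measure on `X^ℕ` (each
cylinder `wX^ℕ` has mass `|X|^{-|w|}`) and `Fix_φ` the fixed-point set of the induced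
homeomorphism of `X^ℕ` (with `X` discrete and the product topology).
Then `μ(Fix_φ \ interior Fix_φ) = 0`. -/
theorem bernoulli_measure_boundary_of_fixSeq_eq_zero
    {X : Type*} [Fintype X] [TopologicalSpace X] [DiscreteTopology X]
    [MeasurableSpace X] (hX : 2 ≤ Fintype.card X)
    (φ : TreeAut X)
    (hfs : (Set.range fun w : List X => φ.restrict w).Finite)
    (μ : Measure (ℕ → X))
    (hμ : ∀ w : List X, μ (cylinder w) = ((Fintype.card X : ℝ≥0∞))⁻¹ ^ w.length) :
    μ (φ.fixSeq \ interior φ.fixSeq) = 0 :=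
  bernoulli_measure_boundary_of_fixSeq_eq_zero_general φ hfs μ hμ
end

section
/- Let G be an étale groupoid. For every f ∈ C_c(G) (span of compactly supported continuous functions on open Hausdorff subsets), the function F(f) : G⁰ → ℂ given by F(f)(x) = Σ_{g ∈ G_x^x} f(g) is Borel measurable. -/
open MeasureTheory
open scoped ENNReal

/-- An étale groupoid: a topological groupoid (possibly non-Hausdorff) on the type `G`,
with partially defined multiplication `mul g h` (meaningful when `src g = rng h`),
inversion `inv`, source and range maps `src`, `rng`, and open unit space `unitSpace`
which is locally compact and Hausdorff; the source and range maps are local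
homeomorphisms. -/
structure EtaleGroupoid (G : Type*) [TopologicalSpace G] : Type _ where
  src : G → G
  rng : G → G
  mul : G → G → G
  inv : G → G
  unitSpace : Set G
  src_mem : ∀ g, src g ∈ unitSpace
  rng_mem : ∀ g, rng g ∈ unitSpace
  src_unit : ∀ u ∈ unitSpace, src u = u
  rng_unit : ∀ u ∈ unitSpace, rng u = u
  src_mul : ∀ g h, src g = rng h → src (mul g h) = src h
  rng_mul : ∀ g h, src g = rng h → rng (mul g h) = rng g
  mul_assoc : ∀ g h k, src g = rng h → src h = rng k →
    mul (mul g h) k = mul g (mul h k)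
  src_inv : ∀ g, src (inv g) = rng g
  rng_inv : ∀ g, rng (inv g) = src g
  inv_mul_self : ∀ g, mul (inv g) g = src g
  mul_inv_self : ∀ g, mul g (inv g) = rng g
  mul_src_self : ∀ g, mul g (src g) = g
  rng_mul_self : ∀ g, mul (rng g) g = g
  isOpen_unitSpace : IsOpen unitSpace
  t2_unitSpace : ∀ x ∈ unitSpace, ∀ y ∈ unitSpace, x ≠ y →
    ∃ U V : Set G, IsOpen U ∧ IsOpen V ∧ x ∈ U ∧ y ∈ V ∧ U ∩ V = ∅
  locallyCompact_unitSpace : ∀ x ∈ unitSpace, ∀ U : Set G, IsOpen U → x ∈ U →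
    ∃ K V : Set G, IsCompact K ∧ IsOpen V ∧ x ∈ V ∧ V ⊆ K ∧ K ⊆ U ∩ unitSpace
  continuous_inv : Continuous inv
  continuousOn_mul : ContinuousOn (fun p : G × G => mul p.1 p.2)
    {p : G × G | src p.1 = rng p.2}
  etale_src : ∀ g : G, ∃ U : Set G, IsOpen U ∧ g ∈ U ∧ Set.InjOn src U ∧
    ContinuousOn src U ∧ ∀ V ⊆ U, IsOpen V → IsOpen (src '' V)
  etale_rng : ∀ g : G, ∃ U : Set G, IsOpen U ∧ g ∈ U ∧ Set.InjOn rng U ∧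
    ContinuousOn rng U ∧ ∀ V ⊆ U, IsOpen V → IsOpen (rng '' V)

namespace EtaleGroupoid

variable {G : Type*} [TopologicalSpace G] (E : EtaleGroupoid G)

/-- The isotropy of `G`: arrows with equal source and range. -/
def iso : Set G := {g : G | E.src g = E.rng g}

/-- An (open) bisection: an open set on which both the source and range maps are
injective (hence homeomorphisms onto their images). -/
def IsBisection (U : Set G) : Prop :=
  IsOpen U ∧ Set.InjOn E.src U ∧ Set.InjOn E.rng U

/-- The semifinite part of a measure:
`μ_sf(A) = sup { μ(B) : B ⊆ A Borel, μ(B) < ∞ }`. -/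
noncomputable def sfPart [MeasurableSpace G] (μ : Measure G) (A : Set G) : ℝ≥0∞ :=
  ⨆ (B : Set G) (_ : MeasurableSet B) (_ : B ⊆ A) (_ : μ B ≠ ⊤), μ B

/-- A Radon measure on the unit space `G⁰`: a Borel measure on `G` concentrated on
`G⁰` which is finite on compact subsets of `G⁰`, inner regular on open subsets of `G⁰`
and outer regular on Borel subsets of `G⁰`. -/
def IsRadonOnUnits [MeasurableSpace G] (μ : Measure G) : Prop :=
  μ E.unitSpaceᶜ = 0 ∧
  (∀ K : Set G, K ⊆ E.unitSpace → IsCompact K → μ K ≠ ⊤) ∧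
  (∀ U : Set G, IsOpen U → U ⊆ E.unitSpace →
    μ U = ⨆ (K : Set G) (_ : IsCompact K) (_ : K ⊆ U), μ K) ∧
  (∀ A : Set G, MeasurableSet A → A ⊆ E.unitSpace →
    μ A = ⨅ (U : Set G) (_ : IsOpen U) (_ : A ⊆ U ∧ U ⊆ E.unitSpace), μ U)

/-- `G` is essentially free with respect to `μ`:
`μ_sf(s(U ∩ Iso(G) \ G⁰)) = 0` for every open bisection `U`. -/
def EssentiallyFree [MeasurableSpace G] (μ : Measure G) : Prop :=
  ∀ U : Set G, E.IsBisection U →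
    sfPart μ (E.src '' ((U ∩ E.iso) \ E.unitSpace)) = 0

end EtaleGroupoid

namespace EtaleGroupoid

variable (G : Type*) [TopologicalSpace G]

/-- The generating set of the convolution algebra `𝒞_c(G)`: functions which are
continuous on some open Hausdorff subset `U ⊆ G`, vanish outside a compact subset of
`U`, and vanish outside `U`. -/
def CcGen : Set (G → ℂ) :=
  {f : G → ℂ | ∃ U : Set G, IsOpen U ∧
    (∀ x ∈ U, ∀ y ∈ U, x ≠ y →
      ∃ V W : Set G, IsOpen V ∧ IsOpen W ∧ x ∈ V ∧ y ∈ W ∧ V ∩ W = ∅) ∧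
    ContinuousOn f U ∧
    ∃ K : Set G, K ⊆ U ∧ IsCompact K ∧ ∀ g ∉ K, f g = 0}

/-- The convolution algebra `𝒞_c(G)`: the linear span of the compactly supported
functions which are continuous on an open Hausdorff subset. -/
noncomputable def Cc : Submodule ℂ (G → ℂ) :=
  Submodule.span ℂ (CcGen G)

variable {G} (E : EtaleGroupoid G)

/-- The convolution product `(a * b)(g) = ∑_{g₁ g₂ = g} a(g₁) b(g₂)`. -/
noncomputable def convolution (a b : G → ℂ) : G → ℂ :=
  fun g => ∑' p : {p : G × G // E.src p.1 = E.rng p.2 ∧ E.mul p.1 p.2 = g},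
    a p.1.1 * b p.1.2

/-- The involution `a*(g) = conj (a (g⁻¹))`. -/
def starFun (a : G → ℂ) : G → ℂ :=
  fun g => star (a (E.inv g))

end EtaleGroupoid

/-!
On an open set `V` on which the source map `s` is injective and open, `s` has a continuous
inverse `σ : s(V) → V`, and `F(f)(x) = 1_{s(V)}(x) · (1_{Iso(G)} f)(σ x)` for every `f`
supported in `V`; as `Iso(G)` is closed, this is Borel. Compactness splits a generator of `𝒞_c(G)` into finitely many Borel
pieces supported in such sets, and `F` is additive on functions whose isotropy sums converge.
-/

open Set Function

theorem Set.InjOn.continuousOn_invFunOn_image {α β : Type*} [TopologicalSpace α]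
    [TopologicalSpace β] [Nonempty α] {φ : α → β} {V : Set α} (hinj : InjOn φ V)
    (hV : IsOpen V) (hopen : ∀ W ⊆ V, IsOpen W → IsOpen (φ '' W)) :
    ContinuousOn (invFunOn φ V) (φ '' V) := by
  rw [continuousOn_iff']
  intro t ht
  refine ⟨φ '' (t ∩ V), hopen _ inter_subset_right (ht.inter hV), ?_⟩
  ext y
  constructor
  · rintro ⟨hyt, g, hg, rfl⟩
    rw [mem_preimage, hinj.leftInvOn_invFunOn hg] at hyt
    exact ⟨mem_image_of_mem φ ⟨hyt, hg⟩, mem_image_of_mem φ hg⟩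
  · rintro ⟨⟨g, ⟨hgt, hg⟩, rfl⟩, hy⟩
    refine ⟨?_, hy⟩
    rw [mem_preimage, hinj.leftInvOn_invFunOn hg]
    exact hgt

namespace EtaleGroupoid

variable {G : Type*} [TopologicalSpace G] (E : EtaleGroupoid G)

theorem continuous_src : Continuous E.src :=
  continuous_iff_continuousAt.2 fun g => by
    obtain ⟨U, hU, hgU, -, hc, -⟩ := E.etale_src g
    exact hc.continuousAt (hU.mem_nhds hgU)

theorem continuous_rng : Continuous E.rng :=
  continuous_iff_continuousAt.2 fun g => by
    obtain ⟨U, hU, hgU, -, hc, -⟩ := E.etale_rng g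
    exact hc.continuousAt (hU.mem_nhds hgU)

theorem isClosed_iso : IsClosed E.iso := by
  rw [← isOpen_compl_iff, isOpen_iff_forall_mem_open]
  intro g hg
  obtain ⟨U, V, hU, hV, hsU, hrV, hUV⟩ :=
    E.t2_unitSpace _ (E.src_mem g) _ (E.rng_mem g) hg
  refine ⟨E.src ⁻¹' U ∩ E.rng ⁻¹' V, ?_,
    (hU.preimage E.continuous_src).inter (hV.preimage E.continuous_rng), hsU, hrV⟩
  rintro k ⟨hkU, hkV⟩ hk
  have : E.src k ∈ U ∩ V := ⟨hkU, (hk : E.src k = E.rng k) ▸ hkV⟩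
  simp [hUV] at this

abbrev IsotropyGroup (x : G) : Type _ := {g : G // E.src g = x ∧ E.rng g = x}

/-- `F(f)(x) = ∑_{g ∈ G_x^x} f(g)`. -/
noncomputable def isotropySum (f : G → ℂ) (x : G) : ℂ := ∑' g : E.IsotropyGroup x, f g

/-- Summability is carried along so that the class is closed under addition. -/
def HasMeasurableIsotropySum [MeasurableSpace G] (f : G → ℂ) : Prop :=
  (∀ x, Summable fun g : E.IsotropyGroup x => f g) ∧ Measurable (E.isotropySum f)

def IsSrcChart (V : Set G) : Prop :=
  IsOpen V ∧ InjOn E.src V ∧ ∀ W ⊆ V, IsOpen W → IsOpen (E.src '' W)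

variable {E}

theorem summable_isotropy_of_injOn {V : Set G} {f : G → ℂ} (hinj : InjOn E.src V)
    (hf : support f ⊆ V) (x : G) : Summable fun g : E.IsotropyGroup x => f g :=
  summable_of_hasFiniteSupport <| Set.Subsingleton.finite fun g hg k hk =>
    Subtype.ext (hinj (hf hg) (hf hk) (g.2.1.trans k.2.1.symm))

theorem isotropySum_eq_indicator [Nonempty G] {V : Set G} {f : G → ℂ}
    (hinj : InjOn E.src V) (hf : support f ⊆ V) :
    E.isotropySum f = (E.src '' V).indicator fun x => E.iso.indicator f (invFunOn E.src V x) := by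
  funext x
  by_cases hx : x ∈ E.src '' V
  · obtain ⟨g, hgV, rfl⟩ := hx
    rw [indicator_of_mem (mem_image_of_mem _ hgV), hinj.leftInvOn_invFunOn hgV]
    have h_eq : ∀ k : E.IsotropyGroup (E.src g), f k ≠ 0 → (k : G) = g := fun k hk =>
      hinj (hf hk) hgV k.2.1
    by_cases hg : g ∈ E.iso
    · rw [indicator_of_mem hg, isotropySum, tsum_eq_single ⟨g, rfl, hg.symm⟩]
      exact fun k hk => by_contra fun hfk => hk (Subtype.ext (h_eq k hfk))
    · rw [indicator_of_notMem hg, isotropySum]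
      refine (tsum_congr fun k => by_contra fun hfk => hg ?_).trans tsum_zero
      rw [← h_eq k hfk]
      exact k.2.1.trans k.2.2.symm
  · rw [indicator_of_notMem hx, isotropySum]
    exact (tsum_congr fun k : E.IsotropyGroup x =>
      by_contra fun hfk => hx ⟨k, hf hfk, k.2.1⟩).trans tsum_zero

variable [MeasurableSpace G]

theorem HasMeasurableIsotropySum.zero : E.HasMeasurableIsotropySum 0 := by
  refine ⟨fun x => summable_zero, ?_⟩
  have : E.isotropySum 0 = 0 := funext fun x => tsum_zero
  rw [this]
  exact measurable_const

theorem HasMeasurableIsotropySum.add {a b : G → ℂ} (ha : E.HasMeasurableIsotropySum a)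
    (hb : E.HasMeasurableIsotropySum b) : E.HasMeasurableIsotropySum (a + b) := by
  refine ⟨fun x => (ha.1 x).add (hb.1 x), ?_⟩
  have : E.isotropySum (a + b) = E.isotropySum a + E.isotropySum b :=
    funext fun x => (ha.1 x).tsum_add (hb.1 x)
  rw [this]
  exact ha.2.add hb.2

theorem HasMeasurableIsotropySum.smul {a : G → ℂ} (c : ℂ) (ha : E.HasMeasurableIsotropySum a) :
    E.HasMeasurableIsotropySum (c • a) := by
  refine ⟨fun x => (ha.1 x).mul_left c, ?_⟩
  have : E.isotropySum (c • a) = c • E.isotropySum a := funext fun x => tsum_mul_left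
  rw [this]
  exact ha.2.const_smul c

variable [BorelSpace G]

theorem measurable_isotropySum_of_isSrcChart {V : Set G} {f : G → ℂ} (hV : E.IsSrcChart V)
    (hm : Measurable f) (hf : support f ⊆ V) : Measurable (E.isotropySum f) := by
  rcases isEmpty_or_nonempty G with _ | _
  · exact Subsingleton.measurable
  obtain ⟨hVo, hinj, hopen⟩ := hV
  rw [isotropySum_eq_indicator hinj hf]
  set T := E.src '' V
  set σ := invFunOn E.src V
  have hσ : Continuous (T.domRestrict σ) :=
    (hinj.continuousOn_invFunOn_image hVo hopen).domRestrict
  refine measurable_of_restrict_of_restrict_compl (hopen V subset_rfl hVo).measurableSet ?_ ?_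
  · have : T.domRestrict (T.indicator fun x => E.iso.indicator f (σ x)) =
        E.iso.indicator f ∘ T.domRestrict σ :=
      funext fun x => indicator_of_mem x.2 _
    rw [this]
    exact (hm.indicator E.isClosed_iso.measurableSet).comp hσ.measurable
  · have : Tᶜ.domRestrict (T.indicator fun x => E.iso.indicator f (σ x)) = 0 :=
      funext fun x => indicator_of_notMem x.2 _
    rw [this]
    exact measurable_const

theorem hasMeasurableIsotropySum_of_isSrcChart {V : Set G} {f : G → ℂ} (hV : E.IsSrcChart V)
    (hm : Measurable f) (hf : support f ⊆ V) : E.HasMeasurableIsotropySum f :=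
  ⟨summable_isotropy_of_injOn hV.2.1 hf, measurable_isotropySum_of_isSrcChart hV hm hf⟩

theorem hasMeasurableIsotropySum_of_support_subset_biUnion {ι : Type*} {V : ι → Set G}
    (hV : ∀ i, E.IsSrcChart (V i)) (t : Finset ι) {f : G → ℂ} (hm : Measurable f)
    (hf : support f ⊆ ⋃ i ∈ t, V i) : E.HasMeasurableIsotropySum f := by
  classical
  induction t using Finset.induction_on generalizing f with
  | empty =>
    obtain rfl : f = 0 := support_eq_empty_iff.1 (subset_empty_iff.1 (by simpa using hf))
    exact .zero
  | insert a t _ ih =>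
    have hVa := (hV a).1.measurableSet
    rw [← indicator_self_add_compl (V a) f]
    refine (hasMeasurableIsotropySum_of_isSrcChart (hV a) (hm.indicator hVa)
      support_indicator_subset).add (ih (hm.indicator hVa.compl) ?_)
    rw [support_indicator]
    rintro g ⟨hga, hg⟩
    obtain h | ⟨i, hi, hgi⟩ := by simpa using hf hg
    · exact (hga h).elim
    · exact mem_biUnion hi hgi

theorem hasMeasurableIsotropySum_of_mem_ccGen {f : G → ℂ} (hf : f ∈ CcGen G) :
    E.HasMeasurableIsotropySum f := by
  classical
  obtain ⟨U, hU, -, hfU, K, hKU, hK, hfK⟩ := hf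
  have hsupp : support f ⊆ K := support_subset_iff'.2 hfK
  have hm : Measurable f := by
    rw [← indicator_eq_self.2 (hsupp.trans hKU), ← piecewise_eq_indicator]
    exact hfU.measurable_piecewise continuousOn_const hU.measurableSet
  choose W hWo hgW hWinj _ hWopen using E.etale_src
  obtain ⟨t, -, hKt⟩ := hK.elim_nhds_subcover W fun g _ => (hWo g).mem_nhds (hgW g)
  exact hasMeasurableIsotropySum_of_support_subset_biUnion
    (fun g => ⟨hWo g, hWinj g, hWopen g⟩) t hm (hsupp.trans hKt)

theorem hasMeasurableIsotropySum_of_mem_Cc {f : G → ℂ} (hf : f ∈ Cc G) :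
    E.HasMeasurableIsotropySum f := by
  induction hf using Submodule.span_induction with
  | mem a ha => exact hasMeasurableIsotropySum_of_mem_ccGen ha
  | zero => exact .zero
  | add a b _ _ ha hb => exact ha.add hb
  | smul c a _ ha => exact ha.smul c

end EtaleGroupoid

/-- Let `G` be an étale groupoid.  For every `f ∈ 𝒞_c(G)`, the
function `F(f) : G⁰ → ℂ`, `F(f)(x) = ∑_{g ∈ G_x^x} f(g)`, is Borel measurable. -/
theorem measurable_sum_isotropy
    {G : Type*} [TopologicalSpace G] [MeasurableSpace G] [BorelSpace G]
    (E : EtaleGroupoid G) (f : G → ℂ) (hf : f ∈ EtaleGroupoid.Cc G) :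
    Measurable (fun x : E.unitSpace =>
      ∑' g : {g : G // E.src g = (x : G) ∧ E.rng g = (x : G)}, f g) :=
  (EtaleGroupoid.hasMeasurableIsotropySum_of_mem_Cc hf).2.comp measurable_subtype_coe
end
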